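/- Let A, B be bounded normal operators on a Hilbert space with polar decompositions A = u|A|, B = v|B| (u, v unitary). Suppose |A| and |B| commute, u and v commute, u|B|u* = q|B| and v|A|v* = q|A| for some q > 0, and u commutes with |A|, v commutes with |B|. Then A B = B A and A B* = q² B* A. -/

import Mathlib

/-! Multiplying `u|B|u* = q|B|` on the right by `u` turns it into the twisted commutation
`u|B| = q|B|u` (and likewise `v|A| = q|A|v`, `|A|v* = q v*|A|`). Both identities then follow by
reordering the four factors, each swap of a unitary past the other operator's modulus costing a
factor `q`; in `AB = BA` the two sides pick up the same factor `q`, which cancels. -/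

section TwistedCommutation

variable {K R : Type*}

theorem mul_eq_smul_mul_of_conj_eq_smul [Monoid R] [SMul K R] [IsScalarTower K R R]
    {u w b : R} {c : K} (hw : w * u = 1) (h : u * b * w = c • b) : u * b = c • (b * u) := by
  calc u * b = u * b * w * u := by rw [mul_assoc _ w, hw, mul_one]
    _ = c • (b * u) := by rw [h, smul_mul_assoc]

theorem mul_eq_smul_mul_inv_of_conj_eq_smul [Monoid R] [SMul K R] [SMulCommClass K R R]
    {u w b : R} {c : K} (hw : w * u = 1) (h : u * b * w = c • b) : b * w = c • (w * b) := by
  calc b * w = w * (u * b * w) := by rw [← mul_assoc, ← mul_assoc, hw, one_mul]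
    _ = c • (w * b) := by rw [h, mul_smul_comm]

variable [Field K] [Ring R] [Algebra K R]

theorem twisted_mul_comm {u v a b : R} {c : K} (hc : c ≠ 0) (huv : u * v = v * u)
    (hab : a * b = b * a) (hub : u * b = c • (b * u)) (hva : v * a = c • (a * v)) :
    u * a * (v * b) = v * b * (u * a) := by
  have hleft : c • (u * a * (v * b)) = u * v * (a * b) :=
    calc c • (u * a * (v * b)) = u * (c • (a * v)) * b := by
          simp only [mul_smul_comm, smul_mul_assoc, mul_assoc]
      _ = u * v * (a * b) := by rw [← hva]; simp only [mul_assoc]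
  have hright : c • (v * b * (u * a)) = u * v * (a * b) :=
    calc c • (v * b * (u * a)) = v * (c • (b * u)) * a := by
          simp only [mul_smul_comm, smul_mul_assoc, mul_assoc]
      _ = u * v * (a * b) := by rw [← hub, huv, hab]; simp only [mul_assoc]
  exact smul_right_injective R hc (hleft.trans hright.symm)

theorem twisted_mul_mul_comm {u a b w : R} {c : K} (hua : u * a = a * u)
    (hab : a * b = b * a) (hub : u * b = c • (b * u)) (haw : a * w = c • (w * a))
    (hwu : w * u = u * w) :
    u * a * (b * w) = c ^ 2 • (b * w * (u * a)) := by
  calc u * a * (b * w) = a * (u * b) * w := by rw [hua]; simp only [mul_assoc]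
    _ = c • (b * (a * w) * u) := by
      rw [hub, mul_smul_comm, smul_mul_assoc, ← mul_assoc a b u, hab]
      simp only [mul_assoc, hwu]
    _ = c ^ 2 • (b * w * (u * a)) := by
      rw [haw, mul_smul_comm, smul_mul_assoc, smul_smul, ← sq, hua]
      simp only [mul_assoc]

end TwistedCommutation

theorem twisted_commutation_relations_general {H : Type*} [NormedAddCommGroup H]
    [InnerProductSpace ℂ H] [CompleteSpace H]
    (A B u v a b : H →L[ℂ] H) (q : ℝ) (hq : 0 < q)
    (hu : u * star u = 1 ∧ star u * u = 1)
    (hv : v * star v = 1 ∧ star v * v = 1)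
    (hb : b.IsPositive)
    (hA : A = u * a) (hB : B = v * b)
    (hab : a * b = b * a) (huv : u * v = v * u)
    (hua : u * a = a * u)
    (hub : u * b * star u = (q : ℂ) • b)
    (hva : v * a * star v = (q : ℂ) • a) :
    A * B = B * A ∧ A * star B = ((q : ℂ) ^ 2) • (star B * A) := by
  obtain ⟨-, hu⟩ := hu
  obtain ⟨hv, hv'⟩ := hv
  have hub' := mul_eq_smul_mul_of_conj_eq_smul hu hub
  have hva' := mul_eq_smul_mul_of_conj_eq_smul hv' hva
  have hav := mul_eq_smul_mul_inv_of_conj_eq_smul hv' hva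
  have hvu : star v * u = u * star v :=
    Commute.units_inv_left (u := ⟨v, star v, hv, hv'⟩) huv.symm
  have hBstar : star B = b * star v := by rw [hB, star_mul, hb.isSelfAdjoint.star_eq]
  subst hA hB
  rw [hBstar]
  exact ⟨twisted_mul_comm (by exact_mod_cast hq.ne') huv hab hub' hva',
    twisted_mul_mul_comm hua hab hub' hav hvu⟩

/-- Abstract form of the commutation relations of the twisted generators.
Let `A = u|A|`, `B = v|B|` be polar decompositions of bounded normal operators
(`u, v` unitary, `|A|, |B| ≥ 0`), with `|A|` and `|B|` commuting, `u` and `v`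
commuting, `u` commuting with `|A|`, `v` with `|B|`, and
`u|B|u* = q|B|`, `v|A|v* = q|A|` for some `q > 0`. Then `AB = BA` and
`AB* = q² B*A`. -/
theorem twisted_commutation_relations {H : Type*} [NormedAddCommGroup H]
    [InnerProductSpace ℂ H] [CompleteSpace H]
    (A B u v a b : H →L[ℂ] H) (q : ℝ) (hq : 0 < q)
    (hu : u * star u = 1 ∧ star u * u = 1)
    (hv : v * star v = 1 ∧ star v * v = 1)
    (ha : a.IsPositive) (hb : b.IsPositive)
    (hA : A = u * a) (hB : B = v * b)
    (hAnormal : star A * A = A * star A) (hBnormal : star B * B = B * star B)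
    (hab : a * b = b * a) (huv : u * v = v * u)
    (hua : u * a = a * u) (hvb : v * b = b * v)
    (hub : u * b * star u = (q : ℂ) • b)
    (hva : v * a * star v = (q : ℂ) • a) :
    A * B = B * A ∧ A * star B = ((q : ℂ) ^ 2) • (star B * A) :=
  twisted_commutation_relations_general A B u v a b q hq hu hv hb hA hB hab huv hua hub hva
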